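/- Let $p_\infty, q_1, q_2$ be smooth positive probability densities on $\mathbb{R}^d$. For $\xi \in [0,1]$ define $q_\xi = \xi q_1 + (1-\xi) q_2$ and $\mathcal{L}(\xi) = \int \|\nabla \log q_\xi - \nabla \log p_\infty\|^2 q_\xi \, dx$. Then the left derivative of $\mathcal{L}$ at $\xi = 1$ equals $D_F(Q_1\|P_\infty) + D_F(Q_2\|Q_1) - D_F(Q_2\|P_\infty)$, where $D_F(P\|Q) = \int p \|\nabla \log p - \nabla \log q\|^2 dx$ is the Fisher divergence. -/

import Mathlib

open MeasureTheory Set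

section Aux
open InnerProductSpace

variable {d : ℕ}
local notation "E" => EuclideanSpace ℝ (Fin d)

lemma gradient_log_eq (f : E → ℝ) (x : E) (hf : DifferentiableAt ℝ f x) (hx : f x ≠ 0) :
    gradient (fun y => Real.log (f y)) x = (f x)⁻¹ • gradient f x := by
  have h1 : HasFDerivAt (fun y => Real.log (f y)) ((f x)⁻¹ • fderiv ℝ f x) x :=
    (Real.hasDerivAt_log hx).comp_hasFDerivAt x hf.hasFDerivAt
  rw [gradient, h1.fderiv, _root_.map_smul, gradient]

lemma gradient_mix (q1 q2 : E → ℝ) (x : E) (h1 : DifferentiableAt ℝ q1 x)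
    (h2 : DifferentiableAt ℝ q2 x) (ξ : ℝ) :
    gradient (fun y => ξ * q1 y + (1 - ξ) * q2 y) x
      = ξ • gradient q1 x + (1 - ξ) • gradient q2 x := by
  have h : HasFDerivAt (fun y => ξ * q1 y + (1 - ξ) * q2 y)
      (ξ • fderiv ℝ q1 x + (1 - ξ) • fderiv ℝ q2 x) x :=
    (h1.hasFDerivAt.const_mul ξ).add (h2.hasFDerivAt.const_mul (1 - ξ))
  rw [gradient, h.fderiv, map_add, _root_.map_smul, _root_.map_smul, gradient, gradient]

lemma pointwise_id (q1 q2 : E → ℝ) (x : E) (h1 : DifferentiableAt ℝ q1 x)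
    (h2 : DifferentiableAt ℝ q2 x) (hp1 : 0 < q1 x) (hp2 : 0 < q2 x)
    (ξ : ℝ) (hξ0 : 0 < ξ) (hξ1 : ξ ≤ 1) (sp : E) :
    ‖gradient (fun y => Real.log (ξ * q1 y + (1 - ξ) * q2 y)) x - sp‖ ^ 2
        * (ξ * q1 x + (1 - ξ) * q2 x)
      = ξ * (‖gradient (fun y => Real.log (q1 y)) x - sp‖ ^ 2 * q1 x)
        + (1 - ξ) * (‖gradient (fun y => Real.log (q2 y)) x - sp‖ ^ 2 * q2 x)
        - ξ * (1 - ξ) * (q1 x * q2 x / (ξ * q1 x + (1 - ξ) * q2 x) *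
            ‖gradient (fun y => Real.log (q1 y)) x
              - gradient (fun y => Real.log (q2 y)) x‖ ^ 2) := by
  set p := q1 x with hp
  set q := q2 x with hq
  have hr : 0 < ξ * p + (1 - ξ) * q := by nlinarith
  set s1 := gradient (fun y => Real.log (q1 y)) x with hs1d
  set s2 := gradient (fun y => Real.log (q2 y)) x with hs2d
  have hs1 : gradient q1 x = p • s1 := by
    rw [hs1d, gradient_log_eq q1 x h1 hp1.ne', smul_smul, mul_inv_cancel₀ hp1.ne', one_smul]
  have hs2 : gradient q2 x = q • s2 := by
    rw [hs2d, gradient_log_eq q2 x h2 hp2.ne', smul_smul, mul_inv_cancel₀ hp2.ne', one_smul]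
  have hmixdiff : DifferentiableAt ℝ (fun y => ξ * q1 y + (1 - ξ) * q2 y) x :=
    (h1.const_mul ξ).add (h2.const_mul (1 - ξ))
  have hgrad : gradient (fun y => Real.log (ξ * q1 y + (1 - ξ) * q2 y)) x
      = (ξ * p + (1 - ξ) * q)⁻¹ • ((ξ * p) • s1 + ((1 - ξ) * q) • s2) := by
    rw [gradient_log_eq _ x hmixdiff hr.ne', gradient_mix q1 q2 x h1 h2 ξ, hs1, hs2,
      smul_smul, smul_smul]
  have hv : gradient (fun y => Real.log (ξ * q1 y + (1 - ξ) * q2 y)) x - sp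
      = (ξ * p + (1 - ξ) * q)⁻¹ • ((ξ * p) • (s1 - sp) + ((1 - ξ) * q) • (s2 - sp)) := by
    rw [hgrad]
    match_scalars
    · field_simp
    · field_simp
    · field_simp
      ring
  have hAB : ∀ (α β : ℝ) (A B : E), ‖α • A + β • B‖ ^ 2
      = α ^ 2 * ‖A‖ ^ 2 + 2 * (α * β) * (inner ℝ A B : ℝ) + β ^ 2 * ‖B‖ ^ 2 := by
    intro α β A B
    rw [norm_add_sq_real, norm_smul, norm_smul, real_inner_smul_left, real_inner_smul_right,
      Real.norm_eq_abs, Real.norm_eq_abs, mul_pow, mul_pow, sq_abs, sq_abs]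
    ring
  have hd : ‖s1 - s2‖ ^ 2 = ‖s1 - sp‖ ^ 2 - 2 * (inner ℝ (s1 - sp) (s2 - sp) : ℝ)
      + ‖s2 - sp‖ ^ 2 := by
    have h : s1 - s2 = (s1 - sp) - (s2 - sp) := by abel
    rw [h, norm_sub_sq_real]
  rw [hv, norm_smul, Real.norm_eq_abs, mul_pow, sq_abs, hAB, hd]
  field_simp
  ring

lemma continuous_gradient_log (f : E → ℝ) (hf : ContDiff ℝ (⊤ : ℕ∞) f) (hpos : ∀ x, 0 < f x) :
    Continuous (fun x => gradient (fun y => Real.log (f y)) x) := by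
  have hlog : ContDiff ℝ (⊤ : ℕ∞) (fun y => Real.log (f y)) := hf.log (fun x => (hpos x).ne')
  have := hlog.continuous_fderiv (by simp)
  exact (toDual ℝ (EuclideanSpace ℝ (Fin d))).symm.continuous.comp this


end Aux

/-- Fisher divergence between densities `p` and `q` (w.r.t. Lebesgue measure):
`D_F(P‖Q) = ∫ p(x) ‖∇ log p(x) − ∇ log q(x)‖² dx`. -/
noncomputable def fisherDiv {d : ℕ} (p q : EuclideanSpace ℝ (Fin d) → ℝ) : ℝ :=
  ∫ x, ‖gradient (fun y => Real.log (p y)) x - gradient (fun y => Real.log (q y)) x‖ ^ 2 * p x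

/-- the left derivative of
`L(ξ) = ∫ ‖∇ log q_ξ − ∇ log p_∞‖² q_ξ dx` at `ξ = 1` equals
`D_F(Q₁‖P_∞) + D_F(Q₂‖Q₁) − D_F(Q₂‖P_∞)`. -/
theorem left_deriv_mixture_fisher_div
    {d : ℕ} (pinf q1 q2 : EuclideanSpace ℝ (Fin d) → ℝ)
    (hpinf_smooth : ContDiff ℝ (⊤ : ℕ∞) pinf) (hq1_smooth : ContDiff ℝ (⊤ : ℕ∞) q1)
    (hq2_smooth : ContDiff ℝ (⊤ : ℕ∞) q2)
    (hpinf_pos : ∀ x, 0 < pinf x) (hq1_pos : ∀ x, 0 < q1 x) (hq2_pos : ∀ x, 0 < q2 x)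
    (hpinf_prob : ∫ x, pinf x = 1) (hq1_prob : ∫ x, q1 x = 1) (hq2_prob : ∫ x, q2 x = 1)
    -- finiteness of the Fisher divergences involved
    (hfin1 : Integrable (fun x =>
      ‖gradient (fun y => Real.log (q1 y)) x - gradient (fun y => Real.log (pinf y)) x‖ ^ 2 * q1 x))
    (hfin2 : Integrable (fun x =>
      ‖gradient (fun y => Real.log (q2 y)) x - gradient (fun y => Real.log (q1 y)) x‖ ^ 2 * q2 x))
    (hfin3 : Integrable (fun x =>
      ‖gradient (fun y => Real.log (q2 y)) x - gradient (fun y => Real.log (pinf y)) x‖ ^ 2 * q2 x))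
    (L : ℝ → ℝ)
    (hL : L = fun ξ => ∫ x,
      ‖gradient (fun y => Real.log (ξ * q1 y + (1 - ξ) * q2 y)) x -
        gradient (fun y => Real.log (pinf y)) x‖ ^ 2 * (ξ * q1 x + (1 - ξ) * q2 x))
    -- differentiation under the integral sign is justified: `L` has a left derivative `L'` at `1`
    (L' : ℝ) (hL' : HasDerivWithinAt L L' (Iic 1) 1) :
    L' = fisherDiv q1 pinf + fisherDiv q2 q1 - fisherDiv q2 pinf := by
  set s1 := fun x : EuclideanSpace ℝ (Fin d) => gradient (fun y => Real.log (q1 y)) x with hs1d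
  set s2 := fun x : EuclideanSpace ℝ (Fin d) => gradient (fun y => Real.log (q2 y)) x with hs2d
  set sp := fun x : EuclideanSpace ℝ (Fin d) => gradient (fun y => Real.log (pinf y)) x with hspd
  have hs1c : Continuous s1 := continuous_gradient_log q1 hq1_smooth hq1_pos
  have hs2c : Continuous s2 := continuous_gradient_log q2 hq2_smooth hq2_pos
  set g := fun (ξ : ℝ) (x : EuclideanSpace ℝ (Fin d)) =>
    q1 x * q2 x / (ξ * q1 x + (1 - ξ) * q2 x) * ‖s1 x - s2 x‖ ^ 2 with hgd
  set I1 : ℝ := ∫ x, ‖s1 x - sp x‖ ^ 2 * q1 x with hI1d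
  set I3 : ℝ := ∫ x, ‖s2 x - sp x‖ ^ 2 * q2 x with hI3d
  set C : ℝ → ℝ := fun ξ => ∫ x, g ξ x with hCd
  have hrpos : ∀ ξ ∈ Icc (1/2 : ℝ) 1, ∀ x, 0 < ξ * q1 x + (1 - ξ) * q2 x := by
    intro ξ hξ x
    have h1 := hq1_pos x; have h2 := hq2_pos x
    nlinarith [hξ.1, hξ.2]
  have hbound : ∀ ξ ∈ Icc (1/2 : ℝ) 1, ∀ x,
      ‖g ξ x‖ ≤ 2 * (‖s2 x - s1 x‖ ^ 2 * q2 x) := by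
    intro ξ hξ x
    have h1 := hq1_pos x; have h2 := hq2_pos x
    have hr := hrpos ξ hξ x
    have hn : (0:ℝ) ≤ ‖s1 x - s2 x‖ ^ 2 := by positivity
    have hfrac : q1 x * q2 x / (ξ * q1 x + (1 - ξ) * q2 x) ≤ 2 * q2 x := by
      rw [div_le_iff₀ hr]
      nlinarith [mul_nonneg (by linarith [hξ.1] : (0:ℝ) ≤ 2 * ξ - 1) (mul_pos h1 h2).le,
        mul_nonneg (by linarith [hξ.2] : (0:ℝ) ≤ 1 - ξ) (mul_pos h2 h2).le]
    have hg0 : 0 ≤ g ξ x := by positivity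
    rw [Real.norm_eq_abs, abs_of_nonneg hg0]
    calc g ξ x ≤ 2 * q2 x * ‖s1 x - s2 x‖ ^ 2 := mul_le_mul_of_nonneg_right hfrac hn
      _ = 2 * (‖s2 x - s1 x‖ ^ 2 * q2 x) := by rw [norm_sub_rev]; ring
  have hgint : ∀ ξ ∈ Icc (1/2 : ℝ) 1, Integrable (g ξ) := by
    intro ξ hξ
    have hmeas : AEStronglyMeasurable (g ξ) volume := by
      refine Continuous.aestronglyMeasurable ?_
      refine Continuous.mul ?_ (by fun_prop)
      have hc12 : Continuous fun x : EuclideanSpace ℝ (Fin d) =>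
          ξ * q1 x + (1 - ξ) * q2 x :=
        (continuous_const.mul hq1_smooth.continuous).add
          (continuous_const.mul hq2_smooth.continuous)
      exact (hq1_smooth.continuous.mul hq2_smooth.continuous).div
        hc12 (fun x => (hrpos ξ hξ x).ne')
    exact (hfin2.const_mul 2).mono' hmeas (Filter.Eventually.of_forall (hbound ξ hξ))
  have hCcont : Filter.Tendsto C (nhdsWithin 1 (Icc (1/2 : ℝ) 1)) (nhds (C 1)) := by
    refine MeasureTheory.tendsto_integral_filter_of_dominated_convergence
      (fun x => 2 * (‖s2 x - s1 x‖ ^ 2 * q2 x)) ?_ ?_ (hfin2.const_mul 2) ?_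
    · exact eventually_nhdsWithin_of_forall
        (fun ξ hξ => (hgint ξ hξ).aestronglyMeasurable)
    · exact eventually_nhdsWithin_of_forall
        (fun ξ hξ => Filter.Eventually.of_forall (hbound ξ hξ))
    · refine Filter.Eventually.of_forall (fun x => ?_)
      have hden : Filter.Tendsto (fun ξ : ℝ => ξ * q1 x + (1 - ξ) * q2 x)
          (nhdsWithin 1 (Icc (1/2:ℝ) 1)) (nhds (1 * q1 x + (1 - 1) * q2 x)) :=
        Filter.Tendsto.mono_left (Continuous.tendsto
          ((continuous_id.mul continuous_const).add
            ((continuous_const.sub continuous_id).mul continuous_const)) 1)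
          nhdsWithin_le_nhds
      have hden1 : (1:ℝ) * q1 x + (1 - 1) * q2 x ≠ 0 := by
        have := hq1_pos x
        simp only [one_mul, sub_self, zero_mul, add_zero]
        exact this.ne'
      exact ((Filter.Tendsto.div (tendsto_const_nhds) hden hden1).mul
        (tendsto_const_nhds (x := ‖s1 x - s2 x‖ ^ 2)))
  -- decomposition of L on [1/2, 1]
  have hLeq : ∀ ξ ∈ Icc (1/2 : ℝ) 1,
      L ξ = ξ * I1 + ((1 - ξ) * I3 - ξ * (1 - ξ) * C ξ) := by
    intro ξ hξ
    have hξ0 : (0:ℝ) < ξ := by linarith [hξ.1]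
    have hξ1 : ξ ≤ 1 := hξ.2
    rw [hL]
    have hpt : ∀ x, ‖gradient (fun y => Real.log (ξ * q1 y + (1 - ξ) * q2 y)) x - sp x‖ ^ 2
          * (ξ * q1 x + (1 - ξ) * q2 x)
        = ξ * (‖s1 x - sp x‖ ^ 2 * q1 x)
          + ((1 - ξ) * (‖s2 x - sp x‖ ^ 2 * q2 x) - ξ * (1 - ξ) * g ξ x) := by
      intro x
      have := pointwise_id q1 q2 x (hq1_smooth.differentiable (by simp) x)
        (hq2_smooth.differentiable (by simp) x) (hq1_pos x) (hq2_pos x) ξ hξ0 hξ1 (sp x)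
      rw [this]
      ring
    have hint1 : Integrable (fun x => ξ * (‖s1 x - sp x‖ ^ 2 * q1 x)) := hfin1.const_mul ξ
    have hint3 : Integrable (fun x => (1 - ξ) * (‖s2 x - sp x‖ ^ 2 * q2 x)) :=
      hfin3.const_mul (1 - ξ)
    have hintg : Integrable (fun x => ξ * (1 - ξ) * g ξ x) := (hgint ξ hξ).const_mul _
    calc (∫ x, ‖gradient (fun y => Real.log (ξ * q1 y + (1 - ξ) * q2 y)) x - sp x‖ ^ 2
          * (ξ * q1 x + (1 - ξ) * q2 x))
        = ∫ x, (ξ * (‖s1 x - sp x‖ ^ 2 * q1 x)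
            + ((1 - ξ) * (‖s2 x - sp x‖ ^ 2 * q2 x) - ξ * (1 - ξ) * g ξ x)) := by
          exact integral_congr_ae (Filter.Eventually.of_forall hpt)
      _ = ξ * I1 + ((1 - ξ) * I3 - ξ * (1 - ξ) * C ξ) := by
          have hint4 : Integrable (fun x => (1 - ξ) * (‖s2 x - sp x‖ ^ 2 * q2 x)
              - ξ * (1 - ξ) * g ξ x) := hint3.sub hintg
          rw [integral_add hint1 hint4, integral_sub hint3 hintg,
            integral_const_mul, integral_const_mul, integral_const_mul]
  have h1mem : (1:ℝ) ∈ Icc (1/2 : ℝ) 1 := by constructor <;> norm_num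
  -- derivative of the correction term
  have hD3 : HasDerivWithinAt (fun ξ : ℝ => ξ * (1 - ξ) * C ξ) (-(1 * C 1))
      (Icc (1/2 : ℝ) 1) 1 := by
    rw [hasDerivWithinAt_iff_tendsto_slope]
    have key : Filter.Tendsto (fun ξ : ℝ => -(ξ * C ξ))
        (nhdsWithin 1 (Icc (1/2 : ℝ) 1 \ {1})) (nhds (-(1 * C 1))) := by
      have h1 : Filter.Tendsto (fun ξ : ℝ => ξ * C ξ)
          (nhdsWithin 1 (Icc (1/2 : ℝ) 1)) (nhds (1 * C 1)) :=
        (Filter.tendsto_id.mono_left nhdsWithin_le_nhds).mul hCcont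
      exact (h1.mono_left (nhdsWithin_mono 1 diff_subset)).neg
    refine key.congr' ?_
    filter_upwards [self_mem_nhdsWithin] with ξ hξ
    have hne : ξ - 1 ≠ 0 := sub_ne_zero.mpr (by simpa using hξ.2)
    have : slope (fun ξ : ℝ => ξ * (1 - ξ) * C ξ) 1 ξ
        = (ξ * (1 - ξ) * C ξ - 1 * (1 - 1) * C 1) / (ξ - 1) := by
      simp [slope, div_eq_inv_mul]
    rw [this]
    field_simp
    ring
  have hDa : HasDerivWithinAt (fun ξ : ℝ => ξ * I1) I1 (Icc (1/2 : ℝ) 1) 1 :=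
    (hasDerivAt_mul_const I1).hasDerivWithinAt
  have hDb : HasDerivWithinAt (fun ξ : ℝ => (1 - ξ) * I3) (-1 * I3) (Icc (1/2 : ℝ) 1) 1 :=
    (((hasDerivAt_id (1:ℝ)).const_sub 1).mul_const I3).hasDerivWithinAt
  have hH : HasDerivWithinAt (fun ξ : ℝ => ξ * I1 + ((1 - ξ) * I3 - ξ * (1 - ξ) * C ξ))
      (I1 + (-1 * I3 - -(1 * C 1))) (Icc (1/2 : ℝ) 1) 1 := hDa.add (hDb.sub hD3)
  have hL2 : HasDerivWithinAt L (I1 + (-1 * I3 - -(1 * C 1))) (Icc (1/2 : ℝ) 1) 1 :=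
    hH.congr (fun ξ hξ => hLeq ξ hξ) (hLeq 1 h1mem)
  have hu : UniqueDiffWithinAt ℝ (Icc (1/2 : ℝ) 1) 1 :=
    (uniqueDiffOn_Icc (by norm_num : (1/2:ℝ) < 1)) 1 h1mem
  have hL3 : HasDerivWithinAt L L' (Icc (1/2 : ℝ) 1) 1 := hL'.mono Icc_subset_Iic_self
  have hL'eq : L' = I1 + (-1 * I3 - -(1 * C 1)) := by
    rw [← hL3.derivWithin hu, ← hL2.derivWithin hu]
  -- identify the Fisher divergences
  have hF1 : fisherDiv q1 pinf = I1 := rfl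
  have hF3 : fisherDiv q2 pinf = I3 := rfl
  have hF2 : fisherDiv q2 q1 = C 1 := by
    have hg1 : ∀ x, g 1 x = ‖s2 x - s1 x‖ ^ 2 * q2 x := by
      intro x
      have h1 := hq1_pos x
      have : (1:ℝ) * q1 x + (1 - 1) * q2 x = q1 x := by ring
      have h2 : q1 x * q2 x / (1 * q1 x + (1 - 1) * q2 x) = q2 x := by
        rw [this]; field_simp
      rw [hgd]
      dsimp only
      rw [h2, norm_sub_rev (s1 x) (s2 x)]
      ring
    have : (fun x => g 1 x) = fun x => ‖s2 x - s1 x‖ ^ 2 * q2 x := funext hg1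
    show (∫ x, ‖s2 x - s1 x‖ ^ 2 * q2 x) = C 1
    rw [hCd]
    simp only [this]
  rw [hF1, hF2, hF3, hL'eq]
  ring
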